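/- arXiv:2405.00076 — 9 statements merged into one kernel-verified Lean document; each statement's English description precedes it below -/
import Mathlib

section
/- For every S : Finset (Fin m): (i) cf_a(S) = 1 if and only if WAXp(S); (ii) cf_n(S) = 1 if and only if WCXp(Finset.univ \ S); (iii) cf_c(S) = 1 if and only if WCXp(S). -/
open scoped Classical

noncomputable section

/-- The set of points of feature space agreeing with `v` on the features in `S`. -/
def Upsilon {m : ℕ} (D : Fin m → Type) [∀ i, Fintype (D i)] (v : ∀ i, D i)
    (S : Finset (Fin m)) : Finset (∀ i, D i) :=
  Finset.univ.filter (fun x => ∀ i ∈ S, x i = v i)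

/-- The similarity characteristic function. -/
def cf_s {m : ℕ} (D : Fin m → Type) [∀ i, Fintype (D i)] (v : ∀ i, D i)
    (σ : (∀ i, D i) → Prop) (S : Finset (Fin m)) : ℝ :=
  (1 / (Upsilon D v S).card) * ∑ x ∈ Upsilon D v S, (if σ x then (1 : ℝ) else 0)

/-- The WAXp-based characteristic function. -/
def cf_a {m : ℕ} (D : Fin m → Type) [∀ i, Fintype (D i)] (v : ∀ i, D i)
    (σ : (∀ i, D i) → Prop) (S : Finset (Fin m)) : ℝ :=
  if cf_s D v σ S = 1 then 1 else 0

/-- The complement of the WAXp-based characteristic function. -/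
def cf_n {m : ℕ} (D : Fin m → Type) [∀ i, Fintype (D i)] (v : ∀ i, D i)
    (σ : (∀ i, D i) → Prop) (S : Finset (Fin m)) : ℝ :=
  if cf_s D v σ S < 1 then 1 else 0

/-- The WCXp-based characteristic function. -/
def cf_c {m : ℕ} (D : Fin m → Type) [∀ i, Fintype (D i)] (v : ∀ i, D i)
    (σ : (∀ i, D i) → Prop) (S : Finset (Fin m)) : ℝ :=
  if cf_s D v σ (Finset.univ \ S) < 1 then 1 else 0

/-- Weak abductive explanation. -/
def WAXp {m : ℕ} (D : Fin m → Type) [∀ i, Fintype (D i)] (v : ∀ i, D i)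
    (σ : (∀ i, D i) → Prop) (S : Finset (Fin m)) : Prop :=
  ∀ x ∈ Upsilon D v S, σ x

/-- Weak contrastive explanation. -/
def WCXp {m : ℕ} (D : Fin m → Type) (v : ∀ i, D i)
    (σ : (∀ i, D i) → Prop) (S : Finset (Fin m)) : Prop :=
  ∃ x : ∀ i, D i, (∀ i ∉ S, x i = v i) ∧ ¬ σ x

/-- The Shapley value of feature `i` for characteristic function `ν`. -/
def Sv {m : ℕ} (ν : Finset (Fin m) → ℝ) (i : Fin m) : ℝ :=
  ∑ S ∈ (Finset.univ \ ({i} : Finset (Fin m))).powerset,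
    ((Nat.factorial S.card * Nat.factorial (m - S.card - 1) : ℝ) / (Nat.factorial m : ℝ)) *
      (ν (insert i S) - ν S)

lemma Upsilon_card_pos {m : ℕ} (D : Fin m → Type) [∀ i, Fintype (D i)] (v : ∀ i, D i)
    (S : Finset (Fin m)) : 0 < (Upsilon D v S).card := by
  apply Finset.card_pos.mpr
  exact ⟨v, by simp [Upsilon]⟩

lemma cf_s_eq_one_iff {m : ℕ} (D : Fin m → Type) [∀ i, Fintype (D i)] (v : ∀ i, D i)
    (σ : (∀ i, D i) → Prop) (S : Finset (Fin m)) :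
    cf_s D v σ S = 1 ↔ WAXp D v σ S := by
  have hc : (0 : ℝ) < (Upsilon D v S).card := by
    exact_mod_cast Upsilon_card_pos D v S
  unfold cf_s WAXp
  rw [one_div, inv_mul_eq_div, div_eq_one_iff_eq (ne_of_gt hc)]
  constructor
  · intro h x hx
    by_contra hσ
    have hlt : ∑ x ∈ Upsilon D v S, (if σ x then (1 : ℝ) else 0) <
        ∑ _x ∈ Upsilon D v S, (1 : ℝ) := by
      apply Finset.sum_lt_sum
      · intro i _; split <;> norm_num
      · exact ⟨x, hx, by simp [hσ]⟩
    simp only [Finset.sum_const, nsmul_eq_mul, mul_one] at hlt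
    linarith [h]
  · intro h
    rw [Finset.sum_congr rfl (fun x hx => if_pos (h x hx))]
    simp

lemma cf_s_le_one {m : ℕ} (D : Fin m → Type) [∀ i, Fintype (D i)] (v : ∀ i, D i)
    (σ : (∀ i, D i) → Prop) (S : Finset (Fin m)) :
    cf_s D v σ S ≤ 1 := by
  have hc : (0 : ℝ) < (Upsilon D v S).card := by
    exact_mod_cast Upsilon_card_pos D v S
  unfold cf_s
  rw [one_div, inv_mul_eq_div, div_le_one hc]
  calc ∑ x ∈ Upsilon D v S, (if σ x then (1 : ℝ) else 0)
      ≤ ∑ _x ∈ Upsilon D v S, (1 : ℝ) := by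
        apply Finset.sum_le_sum; intro i _; split <;> norm_num
    _ = (Upsilon D v S).card := by simp

lemma cf_s_lt_one_iff {m : ℕ} (D : Fin m → Type) [∀ i, Fintype (D i)] (v : ∀ i, D i)
    (σ : (∀ i, D i) → Prop) (S : Finset (Fin m)) :
    cf_s D v σ S < 1 ↔ ¬ WAXp D v σ S := by
  rw [← cf_s_eq_one_iff D v σ S]
  exact ⟨fun h => ne_of_lt h, fun h => lt_of_le_of_ne (cf_s_le_one D v σ S) h⟩

lemma not_WAXp_iff {m : ℕ} (D : Fin m → Type) [∀ i, Fintype (D i)] (v : ∀ i, D i)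
    (σ : (∀ i, D i) → Prop) (S : Finset (Fin m)) :
    ¬ WAXp D v σ S ↔ WCXp D v σ (Finset.univ \ S) := by
  unfold WAXp WCXp Upsilon
  push_neg
  constructor
  · rintro ⟨x, hx, hσ⟩
    simp only [Finset.mem_filter, Finset.mem_univ, true_and] at hx
    refine ⟨x, fun i hi => hx i ?_, hσ⟩
    simpa using hi
  · rintro ⟨x, hx, hσ⟩
    refine ⟨x, ?_, hσ⟩
    simp only [Finset.mem_filter, Finset.mem_univ, true_and]
    intro i hi
    exact hx i (by simp [hi])

theorem stmt0 {m : ℕ} (hm : 1 ≤ m) (D : Fin m → Type) [∀ i, Fintype (D i)]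
    [∀ i, Nonempty (D i)] (v : ∀ i, D i) (σ : (∀ i, D i) → Prop)
    (S : Finset (Fin m)) :
    (cf_a D v σ S = 1 ↔ WAXp D v σ S) ∧
    (cf_n D v σ S = 1 ↔ WCXp D v σ (Finset.univ \ S)) ∧
    (cf_c D v σ S = 1 ↔ WCXp D v σ S) := by
  refine ⟨?_, ?_, ?_⟩
  · unfold cf_a
    rw [← cf_s_eq_one_iff D v σ S]
    split <;> simp_all
  · unfold cf_n
    rw [← not_WAXp_iff, ← cf_s_lt_one_iff D v σ S]
    split <;> simp_all
  · unfold cf_c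
    have h := (cf_s_lt_one_iff D v σ (Finset.univ \ S)).trans
      (not_WAXp_iff D v σ (Finset.univ \ S))
    rw [Finset.sdiff_sdiff_self_left, Finset.univ_inter] at h
    rw [← h]
    split <;> simp_all

end
end

section
/- For every feature i ∈ Fin m: Sv(cf_a, i) = −Sv(cf_n, i). -/
open scoped Classical

noncomputable section

lemma cf_a_eq {m : ℕ} (D : Fin m → Type) [∀ i, Fintype (D i)]
    (v : ∀ i, D i) (σ : (∀ i, D i) → Prop) (S : Finset (Fin m)) :
    cf_a D v σ S = 1 - cf_n D v σ S := by
  unfold cf_a cf_n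
  by_cases h : cf_s D v σ S = 1
  · simp [h]
  · have : cf_s D v σ S < 1 := lt_of_le_of_ne (cf_s_le_one D v σ S) h
    simp [h, this]

theorem stmt4 {m : ℕ} (hm : 1 ≤ m) (D : Fin m → Type) [∀ i, Fintype (D i)]
    [∀ i, Nonempty (D i)] (v : ∀ i, D i) (σ : (∀ i, D i) → Prop) :
    ∀ i : Fin m, Sv (cf_a D v σ) i = - Sv (cf_n D v σ) i := by
  intro i
  unfold Sv
  rw [← Finset.sum_neg_distrib]
  apply Finset.sum_congr rfl
  intro S _
  rw [cf_a_eq, cf_a_eq]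
  ring

end
end

section
/- For every feature i ∈ Fin m: Sv(cf_a, i) = Sv(cf_c, i). -/
open scoped Classical

noncomputable section

lemma cf_c_eq {m : ℕ} (D : Fin m → Type) [∀ i, Fintype (D i)] (v : ∀ i, D i)
    (σ : (∀ i, D i) → Prop) (S : Finset (Fin m)) :
    cf_c D v σ S = 1 - cf_a D v σ (Finset.univ \ S) := by
  have h := cf_s_le_one D v σ (Finset.univ \ S)
  rw [cf_c, cf_a]
  rcases lt_or_eq_of_le h with h1 | h1
  · rw [if_pos h1, if_neg (ne_of_lt h1)]; ring
  · rw [h1]; simp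

theorem stmt5 {m : ℕ} (hm : 1 ≤ m) (D : Fin m → Type) [∀ i, Fintype (D i)]
    [∀ i, Nonempty (D i)] (v : ∀ i, D i) (σ : (∀ i, D i) → Prop) :
    ∀ i : Fin m, Sv (cf_a D v σ) i = Sv (cf_c D v σ) i := by
  intro i
  set ν := cf_a D v σ with hν
  rw [Sv, Sv]
  rw [show (∑ S ∈ (Finset.univ \ ({i} : Finset (Fin m))).powerset,
      ((Nat.factorial S.card * Nat.factorial (m - S.card - 1) : ℝ) / (Nat.factorial m : ℝ)) *
        (cf_c D v σ (insert i S) - cf_c D v σ S))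
    = ∑ S ∈ (Finset.univ \ ({i} : Finset (Fin m))).powerset,
      ((Nat.factorial S.card * Nat.factorial (m - S.card - 1) : ℝ) / (Nat.factorial m : ℝ)) *
        (ν (Finset.univ \ S) - ν (Finset.univ \ insert i S)) from by
      apply Finset.sum_congr rfl
      intro S _
      rw [cf_c_eq, cf_c_eq]
      ring]
  refine Finset.sum_nbij' (i := fun S => (Finset.univ \ ({i} : Finset (Fin m))) \ S)
    (j := fun S => (Finset.univ \ ({i} : Finset (Fin m))) \ S) ?_ ?_ ?_ ?_ ?_
  · intro S _; exact Finset.mem_powerset.mpr (Finset.sdiff_subset)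
  · intro S _; exact Finset.mem_powerset.mpr (Finset.sdiff_subset)
  · intro S hS
    exact Finset.sdiff_sdiff_eq_self (Finset.mem_powerset.mp hS)
  · intro S hS
    exact Finset.sdiff_sdiff_eq_self (Finset.mem_powerset.mp hS)
  · intro S hS
    have hSsub : S ⊆ Finset.univ \ ({i} : Finset (Fin m)) := Finset.mem_powerset.mp hS
    have hiS : i ∉ S := fun h => by simpa using hSsub h
    set T := (Finset.univ \ ({i} : Finset (Fin m))) \ S with hT
    have h1 : Finset.univ \ insert i S = T := by
      ext x; simp [hT, Finset.mem_sdiff, Finset.mem_insert, and_comm, not_or]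
    have h2 : insert i T = Finset.univ \ S := by
      ext x
      simp only [hT, Finset.mem_insert, Finset.mem_sdiff, Finset.mem_univ, true_and,
        Finset.mem_singleton]
      constructor
      · rintro (rfl | ⟨hx, hxS⟩)
        · exact hiS
        · exact hxS
      · intro hx
        by_cases hxi : x = i
        · exact Or.inl hxi
        · exact Or.inr ⟨hxi, hx⟩
    have hcard : T.card = m - 1 - S.card := by
      rw [hT, Finset.card_sdiff_of_subset hSsub]
      have : (Finset.univ \ ({i} : Finset (Fin m))).card = m - 1 := by
        rw [Finset.card_sdiff_of_subset (by simp)]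
        simp
      rw [this]
    have hScard : S.card ≤ m - 1 := by
      have := Finset.card_le_card hSsub
      simpa [Finset.card_sdiff_of_subset (Finset.singleton_subset_iff.mpr (Finset.mem_univ i))] using this
    have hcoef : (Nat.factorial T.card * Nat.factorial (m - T.card - 1) : ℝ)
        = (Nat.factorial S.card * Nat.factorial (m - S.card - 1) : ℝ) := by
      rw [hcard]
      have e1 : m - 1 - S.card = m - S.card - 1 := by omega
      have e2 : m - (m - S.card - 1) - 1 = S.card := by omega
      rw [e1, e2, mul_comm]
    have h3 : Finset.univ \ T = insert i S := by
      rw [← h1, Finset.sdiff_sdiff_eq_self (Finset.subset_univ _)]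
    have h4 : Finset.univ \ insert i T = S := by
      rw [h2, Finset.sdiff_sdiff_eq_self (Finset.subset_univ _)]
    show _ = (T.card.factorial : ℝ) * (m - T.card - 1).factorial / m.factorial *
      (ν (Finset.univ \ T) - ν (Finset.univ \ insert i T))
    rw [h3, h4, hcoef]
  

end
end

section
/- Let P, Q : Finset (Fin m) → Prop be decidable predicates exhibiting hitting-set duality, i.e., for every S : Finset (Fin m), Q(S) holds if and only if P(Finset.univ \ S) does not hold. Let ν_P(S) = if P(S) then 1 else 0 and ν_Q(S) = if Q(S) then 1 else 0 be their 0/1 indicator characteristic functions. Then for every feature i ∈ Fin m, Sv(ν_P, i) = Sv(ν_Q, i). -/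
open scoped Classical

noncomputable section

theorem stmt6 {m : ℕ} (hm : 1 ≤ m) (P Q : Finset (Fin m) → Prop)
    (hdual : ∀ S : Finset (Fin m), Q S ↔ ¬ P (Finset.univ \ S)) :
    ∀ i : Fin m,
      Sv (fun S => if P S then (1 : ℝ) else 0) i
        = Sv (fun S => if Q S then (1 : ℝ) else 0) i := by
  intro i
  unfold Sv
  refine Finset.sum_nbij' (fun S => (Finset.univ \ {i}) \ S)
    (fun S => (Finset.univ \ {i}) \ S) ?_ ?_ ?_ ?_ ?_
  · intro S hS
    simp only [Finset.mem_powerset] at *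
    exact Finset.sdiff_subset
  · intro S hS
    simp only [Finset.mem_powerset] at *
    exact Finset.sdiff_subset
  · intro S hS
    simp only [Finset.mem_powerset] at hS
    exact Finset.sdiff_sdiff_eq_self hS
  · intro S hS
    simp only [Finset.mem_powerset] at hS
    exact Finset.sdiff_sdiff_eq_self hS
  · intro S hS
    simp only [Finset.mem_powerset, Finset.subset_sdiff,
      Finset.disjoint_singleton_right] at hS
    obtain ⟨-, hiS⟩ := hS
    have hsub : S ⊆ Finset.univ \ {i} := by
      simp [Finset.subset_sdiff, hiS]
    have hcardle : S.card ≤ m - 1 := by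
      have := Finset.card_le_card hsub
      simpa [Finset.card_sdiff_of_subset (by simp : ({i} : Finset (Fin m)) ⊆ Finset.univ)] using this
    have hcard : ((Finset.univ \ {i}) \ S).card = m - 1 - S.card := by
      rw [Finset.card_sdiff_of_subset hsub]
      simp [Finset.card_sdiff_of_subset (by simp : ({i} : Finset (Fin m)) ⊆ Finset.univ)]
    have h1 : insert i ((Finset.univ \ {i}) \ S) = Finset.univ \ S := by
      ext x
      by_cases hx : x = i <;> simp [hx, hiS, Finset.mem_sdiff]
    have h2 : (Finset.univ \ {i}) \ S = Finset.univ \ insert i S := by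
      ext x
      simp [Finset.mem_sdiff, and_comm]
    have hw : (Nat.factorial S.card : ℝ) * (Nat.factorial (m - S.card - 1) : ℝ)
        = (Nat.factorial ((Finset.univ \ {i}) \ S).card : ℝ)
            * (Nat.factorial (m - ((Finset.univ \ {i}) \ S).card - 1) : ℝ) := by
      rw [hcard]
      have h4 : m - (m - 1 - S.card) - 1 = S.card := by omega
      have h3 : m - S.card - 1 = m - 1 - S.card := by omega
      rw [h4, h3]
      ring
    dsimp only
    rw [h1, h2]
    have hc1 : Finset.univ \ (Finset.univ \ S) = S :=
      Finset.sdiff_sdiff_eq_self (Finset.subset_univ S)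
    have hc2 : Finset.univ \ (Finset.univ \ insert i S) = insert i S :=
      Finset.sdiff_sdiff_eq_self (Finset.subset_univ _)
    have hQ1 : (if Q (Finset.univ \ S) then (1:ℝ) else 0)
        = 1 - (if P S then (1:ℝ) else 0) := by
      by_cases h : P S <;> simp [hdual, hc1, h]
    have hQ2 : (if Q (Finset.univ \ insert i S) then (1:ℝ) else 0)
        = 1 - (if P (insert i S) then (1:ℝ) else 0) := by
      by_cases h : P (insert i S) <;> simp [hdual, hc2, h]
    rw [h2] at hw
    rw [hQ1, hQ2, ← hw]
    ring


end
end

section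
/- Let P : Finset (Fin m) → Prop be monotone, i.e., S ⊆ T and P(S) imply P(T). Then a feature i ∈ Fin m belongs to some subset-minimal set satisfying P if and only if there exists S ⊆ Finset.univ \ {i} such that ¬P(S) and P(insert i S). -/
open scoped Classical

noncomputable section

lemma exists_min_sub {m : ℕ} (P : Finset (Fin m) → Prop) :
    ∀ T : Finset (Fin m), P T → ∃ X ⊆ T, P X ∧ ∀ Y ⊂ X, ¬ P Y := by
  intro T
  induction T using Finset.strongInductionOn with
  | _ T ih =>
    intro hT
    by_cases h : ∀ Y ⊂ T, ¬ P Y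
    · exact ⟨T, subset_rfl, hT, h⟩
    · push_neg at h
      obtain ⟨Y, hYT, hPY⟩ := h
      obtain ⟨X, hXY, hX⟩ := ih Y hYT hPY
      exact ⟨X, hXY.trans hYT.subset, hX⟩

theorem stmt7 {m : ℕ} (hm : 1 ≤ m) (P : Finset (Fin m) → Prop)
    (hmono : ∀ S T : Finset (Fin m), S ⊆ T → P S → P T) (i : Fin m) :
    (∃ X : Finset (Fin m), (P X ∧ ∀ Y ⊂ X, ¬ P Y) ∧ i ∈ X) ↔
      ∃ S ⊆ Finset.univ \ ({i} : Finset (Fin m)), ¬ P S ∧ P (insert i S) := by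
  constructor
  · rintro ⟨X, ⟨hPX, hmin⟩, hiX⟩
    refine ⟨X.erase i, ?_, ?_, ?_⟩
    · intro j hj
      simp [Finset.mem_erase] at hj ⊢
      exact hj.1
    · exact hmin _ (Finset.erase_ssubset hiX)
    · rwa [Finset.insert_erase hiX]
  · rintro ⟨S, hS, hnPS, hPiS⟩
    obtain ⟨X, hXsub, hPX, hminX⟩ := exists_min_sub P (insert i S) hPiS
    refine ⟨X, ⟨hPX, hminX⟩, ?_⟩
    by_contra hiX
    apply hnPS
    apply hmono X S _ hPX
    intro j hj
    rcases Finset.mem_insert.mp (hXsub hj) with h | h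
    · exact absurd (h ▸ hj) hiX
    · exact h

end
end

section
/- Let P : Finset (Fin m) → Prop be a decidable monotone predicate (S ⊆ T and P(S) imply P(T)) and let ν(S) = if P(S) then 1 else 0 be its 0/1 indicator characteristic function. Then for a feature i ∈ Fin m, Sv(ν, i) = 0 if and only if there is no S ⊆ Finset.univ \ {i} with ¬P(S) and P(insert i S). -/
open scoped Classical

noncomputable section

theorem stmt8 {m : ℕ} (hm : 1 ≤ m) (P : Finset (Fin m) → Prop)
    (hmono : ∀ S T : Finset (Fin m), S ⊆ T → P S → P T) (i : Fin m) :
    Sv (fun S => if P S then (1 : ℝ) else 0) i = 0 ↔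
      ¬ ∃ S ⊆ Finset.univ \ ({i} : Finset (Fin m)), ¬ P S ∧ P (insert i S) := by
  have hpos : ∀ S : Finset (Fin m),
      (0 : ℝ) < (Nat.factorial S.card * Nat.factorial (m - S.card - 1) : ℝ) /
        (Nat.factorial m : ℝ) := by
    intro S
    apply div_pos
    · positivity
    · exact_mod_cast Nat.factorial_pos m
  have hnn : ∀ S : Finset (Fin m),
      (0 : ℝ) ≤ (if P (insert i S) then (1 : ℝ) else 0) - (if P S then (1 : ℝ) else 0) := by
    intro S
    by_cases h : P S
    · have : P (insert i S) := hmono S _ (Finset.subset_insert i S) h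
      simp [h, this]
    · by_cases h2 : P (insert i S) <;> simp [h, h2]
  rw [Sv, Finset.sum_eq_zero_iff_of_nonneg (fun S _ => by
    exact mul_nonneg (le_of_lt (hpos S)) (hnn S))]
  constructor
  · rintro h ⟨S, hS, hnP, hP⟩
    have := h S (Finset.mem_powerset.mpr hS)
    rcases mul_eq_zero.mp this with hc | hd
    · exact absurd hc (ne_of_gt (hpos S))
    · simp [hnP, hP] at hd
  · intro h S hS
    by_cases hp : P S
    · have : P (insert i S) := hmono S _ (Finset.subset_insert i S) hp
      simp [hp, this]
    · by_cases h2 : P (insert i S)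
      · exact absurd ⟨S, Finset.mem_powerset.mp hS, hp, h2⟩ h
      · simp [hp, h2]

end
end

section
/- For every S : Finset (Fin m): (i) WAXp(S) holds if and only if S intersects every weak contrastive explanation, i.e., for every T : Finset (Fin m), WCXp(T) implies (S ∩ T).Nonempty; (ii) WCXp(S) holds if and only if S intersects every weak abductive explanation, i.e., for every T : Finset (Fin m), WAXp(T) implies (S ∩ T).Nonempty. -/
open scoped Classical

noncomputable section

theorem stmt13 {m : ℕ} (hm : 1 ≤ m) (D : Fin m → Type) [∀ i, Fintype (D i)]
    [∀ i, Nonempty (D i)] (v : ∀ i, D i) (σ : (∀ i, D i) → Prop)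
    (S : Finset (Fin m)) :
    (WAXp D v σ S ↔ ∀ T : Finset (Fin m), WCXp D v σ T → (S ∩ T).Nonempty) ∧
    (WCXp D v σ S ↔ ∀ T : Finset (Fin m), WAXp D v σ T → (S ∩ T).Nonempty) := by
  constructor
  · constructor
    · rintro hA T ⟨x, hx, hnx⟩
      by_contra hempty
      rw [Finset.not_nonempty_iff_eq_empty] at hempty
      apply hnx
      apply hA x
      simp only [Upsilon, Finset.mem_filter, Finset.mem_univ, true_and]
      intro i hiS
      have hiT : i ∉ T := fun hiT => (Finset.eq_empty_iff_forall_notMem.mp hempty i)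
        (Finset.mem_inter.mpr ⟨hiS, hiT⟩)
      exact hx i hiT
    · intro h
      by_contra hA
      simp only [WAXp, not_forall] at hA
      obtain ⟨x, hxU, hnx⟩ := hA
      simp only [Upsilon, Finset.mem_filter, Finset.mem_univ, true_and] at hxU
      have : (S ∩ Sᶜ).Nonempty := by
        apply h
        exact ⟨x, fun i hi => hxU i (by simpa using hi), hnx⟩
      simp at this
  · constructor
    · rintro ⟨x, hx, hnx⟩ T hT
      by_contra hempty
      rw [Finset.not_nonempty_iff_eq_empty] at hempty
      apply hnx
      apply hT x
      simp only [Upsilon, Finset.mem_filter, Finset.mem_univ, true_and]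
      intro i hiT
      have hiS : i ∉ S := fun hiS => (Finset.eq_empty_iff_forall_notMem.mp hempty i)
        (Finset.mem_inter.mpr ⟨hiS, hiT⟩)
      exact hx i hiS
    · intro h
      by_contra hC
      have hA : WAXp D v σ Sᶜ := by
        intro x hxU
        simp only [Upsilon, Finset.mem_filter, Finset.mem_univ, true_and] at hxU
        by_contra hnx
        exact hC ⟨x, fun i hi => hxU i (by simpa using hi), hnx⟩
      have := h Sᶜ hA
      simp at this

end
end

section
/- For every S : Finset (Fin m): S is an AXp (a subset-minimal WAXp) if and only if S is a minimal hitting set of the set of CXps, i.e., S is subset-minimal among the sets that intersect every CXp; dually, S is a CXp (a subset-minimal WCXp) if and only if S is subset-minimal among the sets that intersect every AXp. -/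
open scoped Classical

noncomputable section

/-- `H` is a hitting set of the family of sets satisfying `G`. -/
def HitsAll {m : ℕ} (G : Finset (Fin m) → Prop) (H : Finset (Fin m)) : Prop :=
  ∀ T : Finset (Fin m), G T → (H ∩ T).Nonempty

/-- Abductive explanation: a subset-minimal WAXp. -/
def AXp {m : ℕ} (D : Fin m → Type) [∀ i, Fintype (D i)] (v : ∀ i, D i)
    (σ : (∀ i, D i) → Prop) (S : Finset (Fin m)) : Prop :=
  WAXp D v σ S ∧ ∀ Y ⊂ S, ¬ WAXp D v σ Y

/-- Contrastive explanation: a subset-minimal WCXp. -/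
def CXp {m : ℕ} (D : Fin m → Type) (v : ∀ i, D i)
    (σ : (∀ i, D i) → Prop) (S : Finset (Fin m)) : Prop :=
  WCXp D v σ S ∧ ∀ Y ⊂ S, ¬ WCXp D v σ Y

section Aux

variable {m : ℕ} {D : Fin m → Type} [∀ i, Fintype (D i)] [∀ i, Nonempty (D i)]
  {v : ∀ i, D i} {σ : (∀ i, D i) → Prop}

lemma mem_Upsilon' {x : ∀ i, D i} {S : Finset (Fin m)} :
    x ∈ Upsilon D v S ↔ ∀ i ∈ S, x i = v i := by
  simp [Upsilon]

lemma not_waxp_iff' {S : Finset (Fin m)} :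
    ¬ WAXp D v σ S ↔ WCXp D v σ (Finset.univ \ S) := by
  unfold WAXp WCXp
  push_neg
  constructor
  · rintro ⟨x, hx, hnx⟩
    exact ⟨x, fun i hi => mem_Upsilon'.1 hx i (by simpa using hi), hnx⟩
  · rintro ⟨x, hx, hnx⟩
    exact ⟨x, mem_Upsilon'.2 fun i hi => hx i (by simp [hi]), hnx⟩

lemma not_wcxp_iff' {S : Finset (Fin m)} :
    ¬ WCXp D v σ S ↔ WAXp D v σ (Finset.univ \ S) := by
  unfold WAXp WCXp
  push_neg
  constructor
  · intro h x hx
    exact h x fun i hi => mem_Upsilon'.1 hx i (by simp [hi])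
  · intro h x hx
    exact h x (mem_Upsilon'.2 fun i hi => hx i (by simpa using hi))

lemma exists_min' (P : Finset (Fin m) → Prop) (S : Finset (Fin m)) :
    P S → ∃ T, T ⊆ S ∧ P T ∧ ∀ Y ⊂ T, ¬ P Y := by
  induction S using Finset.strongInductionOn with
  | _ S ih =>
    intro hS
    by_cases h : ∀ Y ⊂ S, ¬ P Y
    · exact ⟨S, Finset.Subset.refl S, hS, h⟩
    · push_neg at h
      obtain ⟨Y, hYS, hPY⟩ := h
      obtain ⟨T, hTY, hT⟩ := ih Y hYS hPY
      exact ⟨T, hTY.trans hYS.subset, hT⟩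

lemma waxp_iff_hits' {S : Finset (Fin m)} :
    WAXp D v σ S ↔ HitsAll (CXp D v σ) S := by
  constructor
  · intro hS T hT
    by_contra hne
    rw [Finset.not_nonempty_iff_eq_empty] at hne
    obtain ⟨x, hx, hnx⟩ := hT.1
    refine hnx (hS x (mem_Upsilon'.2 fun i hi => hx i fun hiT => ?_))
    have : i ∈ S ∩ T := Finset.mem_inter.2 ⟨hi, hiT⟩
    simp [hne] at this
  · intro hH
    by_contra hna
    rw [not_waxp_iff'] at hna
    obtain ⟨T, hTsub, hT, hmin⟩ := exists_min' _ _ hna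
    obtain ⟨i, hi⟩ := hH T ⟨hT, hmin⟩
    rw [Finset.mem_inter] at hi
    have := hTsub hi.2
    simp at this
    exact this hi.1

lemma wcxp_iff_hits' {S : Finset (Fin m)} :
    WCXp D v σ S ↔ HitsAll (AXp D v σ) S := by
  constructor
  · rintro ⟨x, hx, hnx⟩ T hT
    by_contra hne
    rw [Finset.not_nonempty_iff_eq_empty] at hne
    refine hnx (hT.1 x (mem_Upsilon'.2 fun i hi => hx i fun hiS => ?_))
    have : i ∈ S ∩ T := Finset.mem_inter.2 ⟨hiS, hi⟩
    simp [hne] at this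
  · intro hH
    by_contra hnc
    rw [not_wcxp_iff'] at hnc
    obtain ⟨T, hTsub, hT, hmin⟩ := exists_min' _ _ hnc
    obtain ⟨i, hi⟩ := hH T ⟨hT, hmin⟩
    rw [Finset.mem_inter] at hi
    have := hTsub hi.2
    simp at this
    exact this hi.1

end Aux

theorem stmt14 {m : ℕ} (hm : 1 ≤ m) (D : Fin m → Type) [∀ i, Fintype (D i)]
    [∀ i, Nonempty (D i)] (v : ∀ i, D i) (σ : (∀ i, D i) → Prop)
    (S : Finset (Fin m)) :
    (AXp D v σ S ↔
      (HitsAll (CXp D v σ) S ∧ ∀ Y ⊂ S, ¬ HitsAll (CXp D v σ) Y)) ∧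
    (CXp D v σ S ↔
      (HitsAll (AXp D v σ) S ∧ ∀ Y ⊂ S, ¬ HitsAll (AXp D v σ) Y)) := by
  constructor
  · constructor
    · rintro ⟨h1, h2⟩
      exact ⟨waxp_iff_hits'.1 h1, fun Y hY hH => h2 Y hY (waxp_iff_hits'.2 hH)⟩
    · rintro ⟨h1, h2⟩
      exact ⟨waxp_iff_hits'.2 h1, fun Y hY hW => h2 Y hY (waxp_iff_hits'.1 hW)⟩
  · constructor
    · rintro ⟨h1, h2⟩
      exact ⟨wcxp_iff_hits'.1 h1, fun Y hY hH => h2 Y hY (wcxp_iff_hits'.2 hH)⟩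
    · rintro ⟨h1, h2⟩
      exact ⟨wcxp_iff_hits'.2 h1, fun Y hY hW => h2 Y hY (wcxp_iff_hits'.1 hW)⟩

end
end

section
/- Let 𝔽 = Fin 2 → Fin 2 (two boolean features), let κ : 𝔽 → ℝ be given by κ(x) = if x 0 = 1 then 1 else 2 * (x 1 : ℝ), let v ∈ 𝔽 with v 0 = 1 and v 1 = 1, and let the baseline w ∈ 𝔽 have w 0 = 0 and w 1 = 0. For S : Finset (Fin 2), define the BShap characteristic function cf_b(S) = κ(x^S) where x^S i = v i if i ∈ S and x^S i = w i otherwise. Then Sv(cf_b, 0) = 0 and Sv(cf_b, 1) = 1. -/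
open scoped Classical

noncomputable section

theorem stmt16 (v w : Fin 2 → Fin 2) (hv0 : v 0 = 1) (hv1 : v 1 = 1)
    (hw0 : w 0 = 0) (hw1 : w 1 = 0)
    (κ : (Fin 2 → Fin 2) → ℝ)
    (hκ : ∀ x : Fin 2 → Fin 2, κ x = if x 0 = 1 then 1 else 2 * ((x 1 : ℕ) : ℝ))
    (cf_b : Finset (Fin 2) → ℝ)
    (hcfb : ∀ S : Finset (Fin 2), cf_b S = κ (fun i => if i ∈ S then v i else w i)) :
    Sv cf_b 0 = 0 ∧ Sv cf_b 1 = 1 := by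
  have hp0 : (Finset.univ \ ({0} : Finset (Fin 2))).powerset = {∅, {1}} := by decide
  have hp1 : (Finset.univ \ ({1} : Finset (Fin 2))).powerset = {∅, {0}} := by decide
  constructor
  · rw [Sv, hp0]
    rw [Finset.sum_pair (by decide)]
    simp only [hcfb, hκ]
    norm_num [hv0, hv1, hw0, hw1, Nat.factorial]
  · rw [Sv, hp1]
    rw [Finset.sum_pair (by decide)]
    simp only [hcfb, hκ]
    norm_num [hv0, hv1, hw0, hw1, Nat.factorial]

end
end
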